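/- For every k ≥ 3 there exist ε > 0 and n₀ such that: for every k-vertex graph F that is neither complete nor empty, and every graph G on n ≥ n₀ vertices, s(F,G) < 1 − ε. -/

import Mathlib

open scoped Classical

/-- The induced subgraph frequency `s(F,G)`: the probability that a uniformly random
`|V(F)|`-element subset of the vertices of `G` induces a subgraph isomorphic to `F`. -/
noncomputable def subgraphFreq {V W : Type*} [Fintype V] [Fintype W]
    (F : SimpleGraph V) (G : SimpleGraph W) : ℝ :=
  (((Finset.univ : Finset W).powersetCard (Fintype.card V)).filter
      (fun S => Nonempty (G.induce (↑S : Set W) ≃g F))).card /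
    ((Fintype.card W).choose (Fintype.card V))

/-!
By Ramsey's theorem, every set of `C(2k, k)` vertices of `G` contains a `k`-clique or an
independent `k`-set, and neither induces `F`. So each `m`-set of vertices, `m = C(2k, k)`, contains
at most `C(m, k) - 1` induced copies of `F`; averaging over all `m`-sets bounds the density of
induced copies of `F` by `1 - 1 / C(m, k)`, independently of `n`.
-/

open Finset

lemma Nat.lt_centralBinom (n : ℕ) : n < n.centralBinom :=
  Nat.le_of_dvd n.centralBinom_pos n.succ_dvd_centralBinom

namespace SimpleGraph

variable {V W : Type*} {G : SimpleGraph V} {H : SimpleGraph W}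

lemma Iso.eq_top (e : G ≃g H) (hG : G = ⊤) : H = ⊤ := by
  subst hG
  ext x y
  rw [← e.symm.map_adj_iff, top_adj, top_adj, e.symm.injective.ne_iff]

lemma Iso.eq_bot (e : G ≃g H) (hG : G = ⊥) : H = ⊥ := by
  subst hG
  ext x y
  simpa using e.symm.map_adj_iff (v := x) (w := y)

lemma induce_compl (s : Set V) : Gᶜ.induce s = (G.induce s)ᶜ := by
  ext x y
  simp [Subtype.ext_iff]

lemma induce_eq_bot_of_isClique_compl {s : Set V} (h : Gᶜ.IsClique s) : G.induce s = ⊥ := by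
  rw [← compl_eq_top, ← induce_compl, induce_eq_top]
  exact h

theorem exists_isNClique_or_isNClique_compl_of_choose_le [DecidableEq V] (G : SimpleGraph V) :
    ∀ (a b : ℕ) (T : Finset V), (a + b).choose a ≤ #T →
      (∃ S ⊆ T, G.IsNClique a S) ∨ ∃ S ⊆ T, Gᶜ.IsNClique b S
  | 0, _, _, _ => .inl ⟨∅, empty_subset _, by simp⟩
  | _ + 1, 0, _, _ => .inr ⟨∅, empty_subset _, by simp⟩
  | a + 1, b + 1, T, hT => by
    obtain ⟨v, hv⟩ : T.Nonempty := card_pos.1 ((Nat.choose_pos (by omega)).trans_le hT)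
    have hsub (p : V → Prop) [DecidablePred p] : {w ∈ T.erase v | p w} ⊆ T :=
      (filter_subset _ _).trans (erase_subset _ _)
    have hsplit : #{w ∈ T.erase v | G.Adj v w} + #{w ∈ T.erase v | Gᶜ.Adj v w} = #T - 1 := by
      rw [← card_erase_of_mem hv, ← card_filter_add_card_filter_not (s := T.erase v) (G.Adj v)]
      congr 2
      exact filter_congr fun w hw ↦ by simp [compl_adj, (ne_of_mem_erase hw).symm]
    have hpascal := Nat.choose_succ_succ' (a + b + 1) a
    have hlarge : (a + (b + 1)).choose a ≤ #{w ∈ T.erase v | G.Adj v w} ∨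
        (a + 1 + b).choose (a + 1) ≤ #{w ∈ T.erase v | Gᶜ.Adj v w} := by
      rw [show a + 1 + (b + 1) = a + b + 1 + 1 by ring] at hT
      rw [show a + (b + 1) = a + b + 1 by ring, show a + 1 + b = a + b + 1 by ring]
      omega
    rcases hlarge with hN | hM
    · rcases G.exists_isNClique_or_isNClique_compl_of_choose_le a (b + 1) _ hN with
        ⟨S, hS, hc⟩ | ⟨S, hS, hc⟩
      · exact .inl ⟨insert v S, insert_subset hv (hS.trans (hsub _)),
          hc.insert fun _ hw ↦ (mem_filter.1 (hS hw)).2⟩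
      · exact .inr ⟨S, hS.trans (hsub _), hc⟩
    · rcases G.exists_isNClique_or_isNClique_compl_of_choose_le (a + 1) b _ hM with
        ⟨S, hS, hc⟩ | ⟨S, hS, hc⟩
      · exact .inl ⟨S, hS.trans (hsub _), hc⟩
      · exact .inr ⟨insert v S, insert_subset hv (hS.trans (hsub _)),
          hc.insert fun _ hw ↦ (mem_filter.1 (hS hw)).2⟩

end SimpleGraph

namespace Finset

variable {α : Type*} [Fintype α] [DecidableEq α]

lemma choose_le_card_filter_superset {s : Finset α} {m : ℕ} (hsm : #s ≤ m)
    (hm : m ≤ Fintype.card α) :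
    (Fintype.card α - #s).choose (m - #s) ≤ #{t ∈ powersetCard m univ | s ⊆ t} := by
  calc (Fintype.card α - #s).choose (m - #s)
      = (Fintype.card α - #s).choose (Fintype.card α - m) := Nat.choose_symm_of_eq_add (by omega)
    _ = #(powersetCard (Fintype.card α - m) sᶜ) := by rw [card_powersetCard, card_compl]
    _ ≤ #{t ∈ powersetCard m univ | s ⊆ t} := by
      refine card_le_card_of_injOn compl (fun u hu ↦ ?_) compl_injective.injOn
      rw [mem_coe, mem_powersetCard] at hu
      simp only [coe_filter, Set.mem_ofPred_eq, mem_powersetCard, subset_univ, true_and,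
        card_compl]
      exact ⟨by omega, subset_compl_comm.1 hu.1⟩

theorem card_mul_choose_le_of_forall_card_filter_subset_le {𝒜 : Finset (Finset α)} {k m c : ℕ}
    (h𝒜 : ∀ s ∈ 𝒜, #s = k) (hkm : k ≤ m) (hm : m ≤ Fintype.card α)
    (hc : ∀ t : Finset α, #t = m → #{s ∈ 𝒜 | s ⊆ t} ≤ c) :
    #𝒜 * m.choose k ≤ c * (Fintype.card α).choose k := by
  set n := Fintype.card α
  have hdouble : #𝒜 * (n - k).choose (m - k) ≤ #(powersetCard m (univ : Finset α)) * c :=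
    card_mul_le_card_mul (r := fun (s t : Finset α) ↦ s ⊆ t)
      (fun s hs ↦ h𝒜 s hs ▸ choose_le_card_filter_superset (h𝒜 s hs ▸ hkm) hm)
      (fun t ht ↦ hc t (mem_powersetCard.1 ht).2)
  rw [card_powersetCard, card_univ] at hdouble
  have hpos : 0 < (n - k).choose (m - k) := Nat.choose_pos (by omega)
  refine Nat.le_of_mul_le_mul_right ?_ hpos
  calc #𝒜 * m.choose k * (n - k).choose (m - k)
      = #𝒜 * (n - k).choose (m - k) * m.choose k := by ring
    _ ≤ n.choose m * c * m.choose k := Nat.mul_le_mul_right _ hdouble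
    _ = c * (n.choose m * m.choose k) := by ring
    _ = c * n.choose k * (n - k).choose (m - k) := by rw [Nat.choose_mul hkm, mul_assoc]

end Finset

/-- In `subgraphFreq` the coercion `↑S : Set W` is elaborated as a lift through the `Finset` monad,
so the family being counted is the image of the `k`-subsets in `Finset (Set W)`. -/
lemma subgraphFreq_eq {V W : Type*} [Fintype V] [Fintype W] (F : SimpleGraph V)
    (G : SimpleGraph W) :
    subgraphFreq F G = #((powersetCard (Fintype.card V) univ).filter fun S : Finset W ↦
        Nonempty (G.induce (S : Set W) ≃g F)) / (Fintype.card W).choose (Fintype.card V) := by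
  rw [subgraphFreq, bind_pure_comp, fmap_def, filter_image]
  congr 2
  exact card_image_of_injective _ coe_injective

section InducedDensity

open SimpleGraph

variable {V W : Type*} [Fintype V] {F : SimpleGraph V} {G : SimpleGraph W}

lemma exists_subset_isEmpty_induce_iso (hFtop : F ≠ ⊤) (hFbot : F ≠ ⊥) {T : Finset W}
    (hT : (Fintype.card V).centralBinom ≤ #T) :
    ∃ S ⊆ T, #S = Fintype.card V ∧ IsEmpty (G.induce (S : Set W) ≃g F) := by
  rw [Nat.centralBinom_eq_two_mul_choose, two_mul] at hT
  rcases G.exists_isNClique_or_isNClique_compl_of_choose_le _ _ T hT with ⟨S, hS, hc⟩ | ⟨S, hS, hc⟩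
  · exact ⟨S, hS, hc.card_eq, ⟨fun e ↦ hFtop (e.eq_top (induce_eq_top.2 hc.isClique))⟩⟩
  · exact ⟨S, hS, hc.card_eq,
      ⟨fun e ↦ hFbot (e.eq_bot (induce_eq_bot_of_isClique_compl hc.isClique))⟩⟩

theorem subgraphFreq_le_one_sub_inv_choose [Fintype W] (hFtop : F ≠ ⊤) (hFbot : F ≠ ⊥)
    (hW : (Fintype.card V).centralBinom ≤ Fintype.card W) :
    subgraphFreq F G ≤ 1 - 1 / ((Fintype.card V).centralBinom.choose (Fintype.card V)) := by
  set k := Fintype.card V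
  set m := k.centralBinom
  set A := (powersetCard k univ).filter fun S : Finset W ↦ Nonempty (G.induce (S : Set W) ≃g F)
  have hkm : k < m := k.lt_centralBinom
  have hlocal : ∀ T : Finset W, #T = m → #{S ∈ A | S ⊆ T} ≤ m.choose k - 1 := by
    intro T hT
    obtain ⟨S, hST, hS, hiso⟩ := exists_subset_isEmpty_induce_iso (G := G) hFtop hFbot hT.ge
    have hsub : {S ∈ A | S ⊆ T} ⊂ powersetCard k T := by
      refine ssubset_iff_of_subset (fun S' hS' ↦ ?_) |>.2 ⟨S, mem_powersetCard.2 ⟨hST, hS⟩, ?_⟩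
      · simp only [A, mem_filter, mem_powersetCard] at hS' ⊢
        exact ⟨hS'.2, hS'.1.1.2⟩
      · simp [A, not_nonempty_iff.2 hiso]
    have := card_lt_card hsub
    rw [card_powersetCard, hT] at this
    omega
  have hcount := card_mul_choose_le_of_forall_card_filter_subset_le
    (fun S hS ↦ (mem_powersetCard.1 (mem_filter.1 hS).1).2) hkm.le hW hlocal
  have hmk : (0 : ℝ) < m.choose k := mod_cast Nat.choose_pos hkm.le
  have hWk : (0 : ℝ) < (Fintype.card W).choose k :=
    mod_cast Nat.choose_pos (hkm.le.trans hW)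
  have hcountR : (#A : ℝ) * m.choose k ≤ (m.choose k - 1) * (Fintype.card W).choose k := by
    rw [← Nat.cast_pred (Nat.choose_pos hkm.le)]
    exact_mod_cast hcount
  rw [subgraphFreq_eq, div_le_iff₀ hWk, one_sub_div hmk.ne', div_mul_eq_mul_div, le_div_iff₀ hmk]
  linarith

end InducedDensity

theorem stmt11_general (k : ℕ) :
    ∃ ε : ℝ, 0 < ε ∧ ∃ n₀ : ℕ,
      ∀ F : SimpleGraph (Fin k), F ≠ ⊤ → F ≠ ⊥ →
        ∀ n : ℕ, n₀ ≤ n → ∀ G : SimpleGraph (Fin n),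
          subgraphFreq F G < 1 - ε := by
  have hM : (0 : ℝ) < k.centralBinom.choose k :=
    mod_cast Nat.choose_pos k.lt_centralBinom.le
  refine ⟨1 / (2 * k.centralBinom.choose k), by positivity, k.centralBinom,
    fun F hFtop hFbot n hn G ↦ ?_⟩
  have hfreq := subgraphFreq_le_one_sub_inv_choose (G := G) hFtop hFbot (by simpa using hn)
  simp only [Fintype.card_fin] at hfreq
  have : 1 / (2 * (k.centralBinom.choose k : ℝ)) < 1 / k.centralBinom.choose k := by
    gcongr
    linarith
  linarith

/-- For every `k ≥ 3` there exist `ε > 0` and `n₀` such that every k-vertex graph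
`F` that is neither complete nor empty has induced frequency `s(F,G) < 1 − ε` in
every graph `G` on `n ≥ n₀` vertices. -/
theorem stmt11 (k : ℕ) (hk : 3 ≤ k) :
    ∃ ε : ℝ, 0 < ε ∧ ∃ n₀ : ℕ,
      ∀ F : SimpleGraph (Fin k), F ≠ ⊤ → F ≠ ⊥ →
        ∀ n : ℕ, n₀ ≤ n → ∀ G : SimpleGraph (Fin n),
          subgraphFreq F G < 1 - ε :=
  stmt11_general k
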